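/- For every Borel probability measure μ on the unit sphere S² of ℝ³ and all C₁, C₂ with 0 ≤ C₁ ≤ C₂ ≤ 1, one has g(C₂,μ) − g(C₁,μ) ≤ (2/3)·(C₂ − C₁). -/

import Mathlib

/-!
Write `profile C t = √(C² + (1 - C²) t²)`. For `t² ≤ 1` this is the modulus of the complex
number `C √(1 - t²) + t i`, an affine function of `C`, so `profile · t` is convex, and
`profile 1 t = 1`. Hence `C ↦ g C μ` is convex on `[0, 1]` with `g 1 μ = 1`, and its slope on
`[C₁, C₂]` is at most `(1 - g C₁ μ) / (1 - C₁)`. Since `∑ᵢ ⟨r, eᵢ⟩² = 1` on the sphere, some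
coordinate axis has `∫ ⟨r, eᵢ⟩² dμ ≥ 1/3`, and the pointwise bound
`C + (1 - C) t² ≤ profile C t` gives `g C₁ μ ≥ (1 + 2 C₁) / 3`, so that slope is at most `2/3`.
-/

open MeasureTheory Real
open scoped ENNReal

noncomputable section

abbrev E3 := EuclideanSpace ℝ (Fin 3)

def unitSphere : Set E3 := Metric.sphere (0 : E3) 1

def g (C : ℝ) (μ : Measure E3) : ℝ :=
  ⨆ v : unitSphere, ∫ r, Real.sqrt (C ^ 2 + (1 - C ^ 2) * (inner ℝ r (v : E3) : ℝ) ^ 2) ∂μ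

open Set
open scoped RealInnerProductSpace

theorem ConvexOn.ciSup {E ι : Type*} [AddCommMonoid E] [Module ℝ E] [Nonempty ι] {s : Set E}
    {f : ι → E → ℝ} (hf : ∀ i, ConvexOn ℝ s (f i))
    (hbdd : ∀ x ∈ s, BddAbove (range fun i => f i x)) :
    ConvexOn ℝ s fun x => ⨆ i, f i x := by
  refine ⟨(hf (Classical.arbitrary ι)).1, fun x hx y hy a b ha hb hab => ciSup_le fun i => ?_⟩
  calc f i (a • x + b • y) ≤ a • f i x + b • f i y := (hf i).2 hx hy ha hb hab
    _ ≤ a • (⨆ i, f i x) + b • ⨆ i, f i y := by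
      gcongr
      exacts [le_ciSup (hbdd x hx) i, le_ciSup (hbdd y hy) i]

theorem convexOn_norm_smul_add {F : Type*} [NormedAddCommGroup F] [NormedSpace ℝ F] (w z : F) :
    ConvexOn ℝ univ fun c : ℝ => ‖c • w + z‖ := by
  refine ⟨convex_univ, fun x _ y _ a b ha hb hab => ?_⟩
  calc ‖(a • x + b • y) • w + z‖ = ‖a • (x • w + z) + b • (y • w + z)‖ := by
        congr 1; linear_combination (norm := module) -(hab • z)
    _ ≤ a • ‖x • w + z‖ + b • ‖y • w + z‖ := by
      simpa only [norm_smul_of_nonneg ha, norm_smul_of_nonneg hb, smul_eq_mul]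
        using norm_add_le (a • (x • w + z)) (b • (y • w + z))

def profile (C t : ℝ) : ℝ := √(C ^ 2 + (1 - C ^ 2) * t ^ 2)

section profile

variable {C t : ℝ}

theorem profile_one (t : ℝ) : profile 1 t = 1 := by simp [profile]

theorem profile_le_one (hC : C ∈ Icc 0 1) (ht : t ^ 2 ≤ 1) : profile C t ≤ 1 := by
  refine sqrt_le_one.mpr ?_
  nlinarith [mul_nonneg (sub_nonneg.mpr (pow_le_one₀ hC.1 hC.2 : C ^ 2 ≤ 1)) (sub_nonneg.mpr ht)]

theorem add_mul_sq_le_profile (ht : t ^ 2 ≤ 1) :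
    C + (1 - C) * t ^ 2 ≤ profile C t := by
  refine le_sqrt_of_sq_le ?_
  nlinarith [mul_nonneg (mul_nonneg (sq_nonneg t) (sq_nonneg (1 - C))) (sub_nonneg.mpr ht)]

open Complex in
theorem convexOn_profile (ht : t ^ 2 ≤ 1) : ConvexOn ℝ univ fun C => profile C t := by
  convert convexOn_norm_smul_add ((√(1 - t ^ 2) : ℝ) : ℂ) (t * I) using 2 with C
  rw [real_smul, ← ofReal_mul, norm_add_mul_I, mul_pow, sq_sqrt (sub_nonneg.mpr ht), profile]
  ring_nf

end profile

section integral

variable {F : Type*} [NormedAddCommGroup F] [InnerProductSpace ℝ F] [MeasurableSpace F]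
  {μ : Measure F} {v : F} {C : ℝ}

theorem ae_inner_sq_le_one (hμ : ∀ᵐ r ∂μ, ‖r‖ = 1) (hv : ‖v‖ = 1) :
    ∀ᵐ r ∂μ, ⟪r, v⟫ ^ 2 ≤ 1 := by
  filter_upwards [hμ] with r hr
  refine sq_le_one_iff_abs_le_one _ |>.mpr ?_
  simpa [hr, hv] using abs_real_inner_le_norm r v

variable [OpensMeasurableSpace F]

theorem integrable_inner_sq [IsFiniteMeasure μ] (hμ : ∀ᵐ r ∂μ, ‖r‖ = 1) (hv : ‖v‖ = 1) :
    Integrable (fun r => ⟪r, v⟫ ^ 2) μ := by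
  refine (integrable_const 1).mono' (by fun_prop) ?_
  filter_upwards [ae_inner_sq_le_one hμ hv] with r hr
  rwa [norm_of_nonneg (sq_nonneg _)]

theorem integrable_profile_inner [IsFiniteMeasure μ] (hμ : ∀ᵐ r ∂μ, ‖r‖ = 1) (hv : ‖v‖ = 1)
    (hC : C ∈ Icc 0 1) : Integrable (fun r => profile C ⟪r, v⟫) μ := by
  refine (integrable_const 1).mono' (by unfold profile; fun_prop) ?_
  filter_upwards [ae_inner_sq_le_one hμ hv] with r hr
  exact (norm_of_nonneg (sqrt_nonneg _)).trans_le (profile_le_one hC hr)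

theorem integral_profile_inner_le_one [IsProbabilityMeasure μ] (hμ : ∀ᵐ r ∂μ, ‖r‖ = 1)
    (hv : ‖v‖ = 1) (hC : C ∈ Icc 0 1) : ∫ r, profile C ⟪r, v⟫ ∂μ ≤ 1 := by
  calc ∫ r, profile C ⟪r, v⟫ ∂μ ≤ ∫ _, 1 ∂μ := by
        refine integral_mono_ae (integrable_profile_inner hμ hv hC) (integrable_const 1) ?_
        filter_upwards [ae_inner_sq_le_one hμ hv] with r hr using profile_le_one hC hr
    _ = 1 := by simp

theorem add_mul_integral_inner_sq_le_integral_profile [IsProbabilityMeasure μ]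
    (hμ : ∀ᵐ r ∂μ, ‖r‖ = 1) (hv : ‖v‖ = 1) (hC : C ∈ Icc 0 1) :
    C + (1 - C) * ∫ r, ⟪r, v⟫ ^ 2 ∂μ ≤ ∫ r, profile C ⟪r, v⟫ ∂μ := by
  have hint := (integrable_inner_sq hμ hv).const_mul (1 - C)
  calc C + (1 - C) * ∫ r, ⟪r, v⟫ ^ 2 ∂μ = ∫ r, (C + (1 - C) * ⟪r, v⟫ ^ 2) ∂μ := by
        rw [integral_add (integrable_const C) hint, integral_const_mul]; simp
    _ ≤ ∫ r, profile C ⟪r, v⟫ ∂μ := by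
        refine integral_mono_ae ((integrable_const C).add hint)
          (integrable_profile_inner hμ hv hC) ?_
        filter_upwards [ae_inner_sq_le_one hμ hv] with r hr using add_mul_sq_le_profile hr

theorem convexOn_integral_profile_inner [IsFiniteMeasure μ] (hμ : ∀ᵐ r ∂μ, ‖r‖ = 1)
    (hv : ‖v‖ = 1) : ConvexOn ℝ (Icc 0 1) fun C => ∫ r, profile C ⟪r, v⟫ ∂μ := by
  refine ⟨convex_Icc 0 1, fun x hx y hy a b ha hb hab => ?_⟩
  have hintx := integrable_profile_inner hμ hv hx
  have hinty := integrable_profile_inner hμ hv hy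
  calc ∫ r, profile (a • x + b • y) ⟪r, v⟫ ∂μ
      ≤ ∫ r, (a * profile x ⟪r, v⟫ + b * profile y ⟪r, v⟫) ∂μ := by
        refine integral_mono_ae (integrable_profile_inner hμ hv
          (convex_Icc 0 1 hx hy ha hb hab)) ((hintx.const_mul a).add (hinty.const_mul b)) ?_
        filter_upwards [ae_inner_sq_le_one hμ hv] with r hr
        exact (convexOn_profile hr).2 trivial trivial ha hb hab
    _ = a * ∫ r, profile x ⟪r, v⟫ ∂μ + b * ∫ r, profile y ⟪r, v⟫ ∂μ := by
        rw [integral_add (hintx.const_mul a) (hinty.const_mul b), integral_const_mul,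
          integral_const_mul]

theorem exists_inv_card_le_integral_inner_sq {ι : Type*} [Fintype ι] [Nonempty ι]
    [IsProbabilityMeasure μ] (hμ : ∀ᵐ r ∂μ, ‖r‖ = 1) (b : OrthonormalBasis ι ℝ F) :
    ∃ i, (Fintype.card ι : ℝ)⁻¹ ≤ ∫ r, ⟪r, b i⟫ ^ 2 ∂μ := by
  have hsum : ∑ i, ∫ r, ⟪r, b i⟫ ^ 2 ∂μ = 1 := by
    rw [← integral_finsetSum _ fun i _ => integrable_inner_sq hμ (b.orthonormal.1 i)]
    calc ∫ r, ∑ i, ⟪r, b i⟫ ^ 2 ∂μ = ∫ _, 1 ∂μ := by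
          refine integral_congr_ae ?_
          filter_upwards [hμ] with r hr
          rw [b.sum_sq_inner_left, hr, one_pow]
      _ = 1 := by simp
  obtain ⟨i, -, hi⟩ := Finset.exists_le_of_sum_le Finset.univ_nonempty
    (f := fun _ => (Fintype.card ι : ℝ)⁻¹) (g := fun i => ∫ r, ⟪r, b i⟫ ^ 2 ∂μ)
    (by rw [hsum]; simp)
  exact ⟨i, hi⟩

end integral

instance : Nonempty unitSphere := ⟨⟨EuclideanSpace.single 0 1, by simp [unitSphere]⟩⟩

theorem norm_coe_unitSphere (v : unitSphere) : ‖(v : E3)‖ = 1 := mem_sphere_zero_iff_norm.mp v.2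

section g

variable {μ : Measure E3} {C : ℝ}

theorem g_eq_iSup_integral_profile (C : ℝ) :
    g C μ = ⨆ v : unitSphere, ∫ r, profile C ⟪r, (v : E3)⟫ ∂μ := rfl

variable [IsProbabilityMeasure μ]

theorem bddAbove_range_integral_profile (hμ : ∀ᵐ r ∂μ, ‖r‖ = 1) (hC : C ∈ Icc 0 1) :
    BddAbove (range fun v : unitSphere => ∫ r, profile C ⟪r, (v : E3)⟫ ∂μ) := by
  refine ⟨1, ?_⟩
  rintro _ ⟨v, rfl⟩
  exact integral_profile_inner_le_one hμ (norm_coe_unitSphere v) hC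

theorem convexOn_g (hμ : ∀ᵐ r ∂μ, ‖r‖ = 1) : ConvexOn ℝ (Icc 0 1) fun C => g C μ := by
  simp_rw [g_eq_iSup_integral_profile]
  exact .ciSup (fun v => convexOn_integral_profile_inner hμ (norm_coe_unitSphere v))
    fun _ hC => bddAbove_range_integral_profile hμ hC

theorem g_one : g 1 μ = 1 := by
  simp [g_eq_iSup_integral_profile, profile_one]

theorem one_add_two_mul_div_three_le_g (hμ : ∀ᵐ r ∂μ, ‖r‖ = 1) (hC : C ∈ Icc 0 1) :
    (1 + 2 * C) / 3 ≤ g C μ := by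
  set b := EuclideanSpace.basisFun (Fin 3) ℝ
  obtain ⟨i, hi⟩ := exists_inv_card_le_integral_inner_sq hμ b
  have hbi : ‖b i‖ = 1 := b.orthonormal.1 i
  calc (1 + 2 * C) / 3 = C + (1 - C) * (Fintype.card (Fin 3) : ℝ)⁻¹ := by
        rw [Fintype.card_fin]; ring
    _ ≤ C + (1 - C) * ∫ r, ⟪r, b i⟫ ^ 2 ∂μ := by gcongr; linarith [hC.2]
    _ ≤ ∫ r, profile C ⟪r, b i⟫ ∂μ := add_mul_integral_inner_sq_le_integral_profile hμ hbi hC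
    _ ≤ g C μ := le_ciSup (bddAbove_range_integral_profile hμ hC)
        (⟨b i, mem_sphere_zero_iff_norm.mpr hbi⟩ : unitSphere)

end g

theorem g_slope_bound (μ : Measure E3) [IsProbabilityMeasure μ] (hμ : μ unitSphereᶜ = 0)
    (C₁ C₂ : ℝ) (h0 : 0 ≤ C₁) (h12 : C₁ ≤ C₂) (h1 : C₂ ≤ 1) :
    g C₂ μ - g C₁ μ ≤ (2 / 3) * (C₂ - C₁) := by
  have hμ' : ∀ᵐ r ∂μ, ‖r‖ = 1 := by
    filter_upwards [measure_eq_zero_iff_ae_notMem.mp hμ] with r hr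
    simpa [unitSphere] using hr
  rcases h12.eq_or_lt with rfl | hlt
  · simp
  have hC₁ : C₁ ∈ Icc 0 1 := ⟨h0, by linarith⟩
  have hsecant := (convexOn_g hμ').secant_mono hC₁ ⟨h0.trans h12, h1⟩ ⟨zero_le_one, le_rfl⟩
    hlt.ne' (by linarith) h1
  rw [g_one] at hsecant
  have hlow := one_add_two_mul_div_three_le_g hμ' hC₁
  have hslope : (g C₂ μ - g C₁ μ) / (C₂ - C₁) ≤ 2 / 3 :=
    hsecant.trans <| by rw [div_le_iff₀ (by linarith)]; linarith
  exact (div_le_iff₀ (sub_pos.mpr hlt)).mp hslope
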